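/- (Tarski–Seidenberg, logical form, consequence) Let Φ be a first-order formula in the language of ordered fields with parameters in ℝ and free variables x_1, …, x_n (built from atomic formulas f(x_1,…,x_n) = 0 and g(x_1,…,x_n) > 0 with f, g real polynomials, using finitely many conjunctions, disjunctions, negations, and universal and existential quantifiers). Then the set S_Φ := {x ∈ ℝ^n | Φ(x) holds} is a semialgebraic subset of ℝ^n. -/

import Mathlib

/-- A basic semialgebraic set: defined by finitely many polynomial strict
inequalities and equalities. -/
def IsBasicSemialgebraic {n : ℕ} (S : Set (Fin n → ℝ)) : Prop :=
  ∃ (s t : ℕ) (f : Fin s → MvPolynomial (Fin n) ℝ) (g : Fin t → MvPolynomial (Fin n) ℝ),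
    S = {x | (∀ i, 0 < MvPolynomial.eval x (f i)) ∧ (∀ j, MvPolynomial.eval x (g j) = 0)}

/-- A semialgebraic subset of `ℝ^n`: a finite union of basic semialgebraic sets. -/
def IsSemialgebraic {n : ℕ} (A : Set (Fin n → ℝ)) : Prop :=
  ∃ (r : ℕ) (S : Fin r → Set (Fin n → ℝ)),
    (∀ i, IsBasicSemialgebraic (S i)) ∧ A = ⋃ i, S i

/-- A map defined on a subset `A ⊆ ℝ^m` with values in `ℝ^n` is semialgebraic if its
graph `{(x, f x) | x ∈ A} ⊆ ℝ^{m+n}` is a semialgebraic set. -/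
def IsSemialgebraicMapOn {m n : ℕ} (A : Set (Fin m → ℝ))
    (f : (Fin m → ℝ) → (Fin n → ℝ)) : Prop :=
  IsSemialgebraic {z : Fin (m + n) → ℝ | ∃ x ∈ A, z = Fin.append x (f x)}

/-- A real-valued function on a subset `A ⊆ ℝ^n` is semialgebraic if its graph
is a semialgebraic subset of `ℝ^{n+1}`. -/
def IsSemialgebraicFunOn {n : ℕ} (A : Set (Fin n → ℝ)) (f : (Fin n → ℝ) → ℝ) : Prop :=
  IsSemialgebraic {z : Fin (n + 1) → ℝ | ∃ x ∈ A, z = Fin.snoc x (f x)}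

/-- First-order formulas in the language of ordered fields with parameters in the reals,
with free variables among the first n variables (quantification in de Bruijn style). -/
inductive RealFormula : ℕ → Type where
  | eq : {n : ℕ} → MvPolynomial (Fin n) ℝ → RealFormula n
  | pos : {n : ℕ} → MvPolynomial (Fin n) ℝ → RealFormula n
  | and : {n : ℕ} → RealFormula n → RealFormula n → RealFormula n
  | or : {n : ℕ} → RealFormula n → RealFormula n → RealFormula n
  | not : {n : ℕ} → RealFormula n → RealFormula n
  | ex : {n : ℕ} → RealFormula (n + 1) → RealFormula n
  | all : {n : ℕ} → RealFormula (n + 1) → RealFormula n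

/-- Interpretation of a formula at a point of ℝⁿ. -/
def RealFormula.Holds : {n : ℕ} → RealFormula n → (Fin n → ℝ) → Prop
  | _, .eq f, x => MvPolynomial.eval x f = 0
  | _, .pos g, x => 0 < MvPolynomial.eval x g
  | _, .and φ ψ, x => φ.Holds x ∧ ψ.Holds x
  | _, .or φ ψ, x => φ.Holds x ∨ ψ.Holds x
  | _, .not φ, x => ¬ φ.Holds x
  | _, .ex φ, x => ∃ t : ℝ, φ.Holds (Fin.snoc x t)
  | _, .all φ, x => ∀ t : ℝ, φ.Holds (Fin.snoc x t)

/-!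
A set is semialgebraic exactly when it is a union of sign classes of a finite family of
polynomials, so Boolean operations are harmless and everything rests on projecting along the last
coordinate. For a finite family `P` of polynomials in `t` with coefficients in `ℝ[x]` there are
finitely many polynomials `G` in `x` such that, whenever `x` and `y` give the same signs to `G`,
an increasing bijection `φ` of `ℝ` carries the sign diagram of `P(y, ·)` to that of `P(x, ·)`;
then `∃ t, (x, t) ∈ S` holds at `x` iff it holds at `y`.

`G` contains the leading coefficients of `P` and is found by induction on the multiset of degrees
in the Dershowitz–Manna order. If a leading coefficient vanishes at `x` it is dropped. Otherwise
the member `p` of top degree is replaced by `p'` and the pseudo-remainders of `p` by `p'` and by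
the other members; these fix the sign of `p` at every root `w` of the others. Between two
consecutive such roots `p` is monotone, in the same direction on both sides, with matching signs
at the ends, so it has a root on one side iff on the other, and `φ` is adjusted on each of these
intervals to carry roots to roots.
-/

open Polynomial Set Filter

section OrderIso

variable {α β : Type*} [LinearOrder α] [LinearOrder β]

theorem exists_orderIso_eqOn_Iic_eqOn_Ici (f g : α ≃o β) {c : α} (hc : f c = g c) :
    ∃ φ : α ≃o β, EqOn φ f (Iic c) ∧ EqOn φ g (Ici c) := by
  let φ : α → β := fun t => if t ≤ c then f t else g t
  have hmono : StrictMono φ := by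
    intro s t hst
    simp only [φ]
    split_ifs with hs ht ht
    · exact f.strictMono hst
    · exact (f.monotone hs).trans_lt (hc ▸ g.strictMono (not_le.1 ht))
    · exact absurd (hst.le.trans ht) hs
    · exact g.strictMono hst
  have hsurj : Function.Surjective φ := by
    intro v
    rcases le_or_gt v (f c) with hv | hv
    · exact ⟨f.symm v, by simp [φ, f.symm_apply_le.2 hv]⟩
    · have : ¬g.symm v ≤ c := by rw [not_le, g.lt_symm_apply, ← hc]; exact hv
      exact ⟨g.symm v, by simp [φ, this]⟩
  refine ⟨hmono.orderIsoOfSurjective φ hsurj, fun t ht => if_pos ht, fun t ht => ?_⟩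
  by_cases htc : t ≤ c
  · simp [φ, le_antisymm htc ht, hc]
  · simp [φ, htc]

end OrderIso

section OrderedField

variable {𝕜 : Type*} [Field 𝕜] [LinearOrder 𝕜] [IsStrictOrderedRing 𝕜]

theorem exists_orderIso_apply_eq_apply_eq {a b a' b' : 𝕜} (h : a < b) (h' : a' < b') :
    ∃ φ : 𝕜 ≃o 𝕜, φ a = a' ∧ φ b = b' := by
  have hk : 0 < (b' - a') / (b - a) := div_pos (sub_pos.2 h') (sub_pos.2 h)
  refine ⟨((OrderIso.addRight (-a)).trans (OrderIso.mulRight₀ _ hk)).trans (OrderIso.addRight a'),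
    by simp, ?_⟩
  simp only [OrderIso.trans_apply, OrderIso.addRight_apply, OrderIso.mulRight₀_apply]
  field_simp [(sub_pos.2 h).ne']
  ring

theorem exists_orderIso_eqOn_of_strictMonoOn {s : Finset 𝕜} {β : 𝕜 → 𝕜}
    (hβ : StrictMonoOn β s) : ∃ φ : 𝕜 ≃o 𝕜, EqOn φ β s := by
  classical
  induction s using Finset.induction_on_max generalizing β with
  | empty => exact ⟨OrderIso.refl 𝕜, by simp⟩
  | insert a s ha ih =>
    obtain ⟨φ₀, hφ₀⟩ := ih (hβ.mono (by simp))
    rcases s.eq_empty_or_nonempty with rfl | hs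
    · exact ⟨OrderIso.addRight (β a - a), by simp⟩
    have hb : s.max' hs ∈ s := s.max'_mem hs
    obtain ⟨g, hgb, hga⟩ := exists_orderIso_apply_eq_apply_eq (ha _ hb)
      (hβ (by simp [hb]) (by simp) (ha _ hb))
    obtain ⟨φ, hφl, hφr⟩ := exists_orderIso_eqOn_Iic_eqOn_Ici φ₀ g (by rw [hφ₀ hb, hgb])
    refine ⟨φ, fun w hw => ?_⟩
    rcases Finset.mem_insert.1 hw with rfl | hw
    · rw [hφr (mem_Ici.2 (ha _ hb).le), hga]
    · rw [hφl (mem_Iic.2 (s.le_max' w hw)), hφ₀ hw]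

end OrderedField

namespace Polynomial

theorem map_eq_map_eraseLead {R S : Type*} [Semiring R] [Semiring S] {f : R →+* S}
    {q : R[X]} (h : f q.leadingCoeff = 0) : q.map f = q.eraseLead.map f := by
  conv_lhs => rw [← eraseLead_add_monomial_natDegree_leadingCoeff q]
  rw [Polynomial.map_add, map_monomial, h, monomial_zero_right, add_zero]

section PseudoDivision

variable {R : Type*} [CommRing R] [IsDomain R]

theorem exists_pseudoDivision {q : R[X]} (hq : q ≠ 0) (p : R[X]) :
    ∃ r : R[X], r.degree < q.degree ∧
      ∃ (k : ℕ) (h : R[X]), C q.leadingCoeff ^ k * p = h * q + r := by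
  induction hd : p.degree using WellFoundedLT.induction generalizing p with
  | _ d ih =>
  by_cases hlt : p.degree < q.degree
  · exact ⟨p, hlt, 0, 0, by simp⟩
  push Not at hlt
  have hp : p ≠ 0 := fun h => by
    rw [h, degree_zero, le_bot_iff, degree_eq_bot] at hlt; exact hq hlt
  have hle : q.natDegree ≤ p.natDegree := natDegree_le_natDegree hlt
  set e := p.natDegree - q.natDegree
  have hlcq : q.leadingCoeff ≠ 0 := leadingCoeff_ne_zero.2 hq
  have hlcp : p.leadingCoeff ≠ 0 := leadingCoeff_ne_zero.2 hp
  have hdeg : (C q.leadingCoeff * p).degree = (C p.leadingCoeff * X ^ e * q).degree := by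
    rw [degree_C_mul hlcq, degree_mul, degree_C_mul_X_pow _ hlcp, degree_eq_natDegree hp,
      degree_eq_natDegree hq, ← Nat.cast_add, Nat.sub_add_cancel hle]
  have hlc : (C q.leadingCoeff * p).leadingCoeff =
      (C p.leadingCoeff * X ^ e * q).leadingCoeff := by
    rw [leadingCoeff_mul, leadingCoeff_mul, leadingCoeff_mul, leadingCoeff_C, leadingCoeff_C,
      leadingCoeff_X_pow, mul_one, mul_comm]
  have hlt := degree_sub_lt_left hdeg (mul_ne_zero (C_ne_zero.2 hlcq) hp) hlc
  rw [degree_C_mul hlcq, hd] at hlt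
  obtain ⟨r, hr, k, h, hk⟩ := ih _ hlt _ rfl
  refine ⟨r, hr, k + 1, h + C q.leadingCoeff ^ k * C p.leadingCoeff * X ^ e, ?_⟩
  linear_combination hk

open Classical in
/-- The pseudo-remainder of `p` by `q`: `C q.leadingCoeff ^ k * p = h * q + pseudoRem p q` with
`(pseudoRem p q).degree < q.degree`; junk value `0` for `q = 0`. -/
noncomputable def pseudoRem (p q : R[X]) : R[X] :=
  if hq : q = 0 then 0 else (exists_pseudoDivision hq p).choose

@[simp]
theorem pseudoRem_zero_right (p : R[X]) : pseudoRem p 0 = 0 := by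
  simp [pseudoRem]

theorem degree_pseudoRem_lt (p : R[X]) {q : R[X]} (hq : q ≠ 0) :
    (pseudoRem p q).degree < q.degree := by
  rw [pseudoRem, dif_neg hq]
  exact (exists_pseudoDivision hq p).choose_spec.1

theorem exists_leadingCoeff_pow_mul_eq (p : R[X]) {q : R[X]} (hq : q ≠ 0) :
    ∃ (k : ℕ) (h : R[X]), C q.leadingCoeff ^ k * p = h * q + pseudoRem p q := by
  rw [pseudoRem, dif_neg hq]
  exact (exists_pseudoDivision hq p).choose_spec.2

end PseudoDivision

end Polynomial

theorem Multiset.isDershowitzMannaLT_map_add_of_lt {α β : Type*} [Preorder β] {f : α → β}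
    {N Q : Multiset α} {a : α} (hN : ∀ b ∈ N, f b < f a) :
    IsDershowitzMannaLT ((N + Q).map f) ((a ::ₘ Q).map f) :=
  ⟨Q.map f, N.map f, {f a}, by simp, by rw [Multiset.map_add, add_comm],
    by rw [Multiset.map_cons, ← Multiset.singleton_add, add_comm], by simpa using hN⟩

noncomputable def derivRemFamily {R : Type*} [CommRing R] [IsDomain R] (p : R[X])
    (Q : Multiset R[X]) : Multiset R[X] :=
  (derivative p ::ₘ Q) + (derivative p ::ₘ Q).map (pseudoRem p)

theorem isDershowitzMannaLT_derivRemFamily {R : Type*} [CommRing R] [IsDomain R] [CharZero R]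
    {p : R[X]} {Q : Multiset R[X]} (hp : 0 < p.natDegree)
    (hQ : ∀ q ∈ Q, q.natDegree ≤ p.natDegree) :
    Multiset.IsDershowitzMannaLT ((derivRemFamily p Q).map degree) ((p ::ₘ Q).map degree) := by
  have hp0 : p ≠ 0 := ne_zero_of_natDegree_gt hp
  have hder : (derivative p).degree < p.degree := degree_derivative_lt hp0
  have hrem : ∀ q ∈ derivative p ::ₘ Q, (pseudoRem p q).degree < p.degree := by
    intro q hq
    rcases eq_or_ne q 0 with rfl | hq0
    · rw [pseudoRem_zero_right, degree_zero]
      exact bot_lt_iff_ne_bot.2 (degree_ne_bot.2 hp0)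
    refine (degree_pseudoRem_lt p hq0).trans_le ?_
    rcases Multiset.mem_cons.1 hq with rfl | hq
    · exact hder.le
    · exact (degree_le_natDegree.trans (WithBot.coe_le_coe.2 (hQ q hq))).trans_eq
        (degree_eq_natDegree hp0).symm
  rw [derivRemFamily, Multiset.cons_add, add_comm Q, ← Multiset.cons_add]
  refine Multiset.isDershowitzMannaLT_map_add_of_lt fun q hq => ?_
  rcases Multiset.mem_cons.1 hq with rfl | hq
  · exact hder
  · obtain ⟨q', hq', rfl⟩ := Multiset.mem_map.1 hq
    exact hrem q' hq'

theorem isDershowitzMannaLT_eraseLead {R : Type*} [Semiring R] {r : R[X]} (hr : r ≠ 0)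
    (Q : Multiset R[X]) :
    Multiset.IsDershowitzMannaLT ((r.eraseLead ::ₘ Q).map degree) ((r ::ₘ Q).map degree) := by
  rw [← Multiset.singleton_add]
  exact Multiset.isDershowitzMannaLT_map_add_of_lt (by simpa using degree_eraseLead_lt hr)

theorem StrictMono.sign_sub {α β : Type*} [Ring α] [LinearOrder α] [IsStrictOrderedRing α]
    [Ring β] [LinearOrder β] [IsStrictOrderedRing β] {f : α → β} (hf : StrictMono f) (a b : α) :
    SignType.sign (f a - f b) = SignType.sign (a - b) := by
  rcases lt_trichotomy a b with h | rfl | h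
  · rw [sign_neg (sub_neg.2 (hf h)), sign_neg (sub_neg.2 h)]
  · simp
  · rw [sign_pos (sub_pos.2 (hf h)), sign_pos (sub_pos.2 h)]

theorem IsPreconnected.sign_eq {X : Type*} [TopologicalSpace X] {C : Set X} {f : X → ℝ}
    (hC : IsPreconnected C) (hf : ContinuousOn f C) (h0 : ∀ x ∈ C, f x ≠ 0) {a b : X}
    (ha : a ∈ C) (hb : b ∈ C) : SignType.sign (f a) = SignType.sign (f b) :=
  hC.constant (f := fun x => SignType.sign (f x))
    (fun x hx => (continuousAt_sign_of_ne_zero (h0 x hx)).comp_continuousWithinAt (hf x hx)) ha hb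

namespace Polynomial

variable {C : Set ℝ} {f : ℝ[X]}

theorem strictMonoOn_eval {D : Set ℝ} (hD : Convex ℝ D)
    (hf : ∀ s ∈ interior D, 0 < f.derivative.eval s) : StrictMonoOn (fun s => f.eval s) D :=
  strictMonoOn_of_deriv_pos hD f.continuousOn (by simpa only [Polynomial.deriv] using hf)

theorem sign_eval_sub_eval (hC : C.OrdConnected) (hf : ∀ s ∈ C, f.derivative.eval s ≠ 0)
    {a b c : ℝ} (ha : a ∈ C) (hb : b ∈ C) (hc : c ∈ C) :
    SignType.sign (f.eval b - f.eval a) =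
      SignType.sign (f.derivative.eval c) * SignType.sign (b - a) := by
  wlog hab : a ≤ b generalizing a b
  · rw [← neg_sub, Left.sign_neg, this hb ha (le_of_not_ge hab), ← neg_sub a, Left.sign_neg,
      mul_neg]
  rcases hab.eq_or_lt with rfl | hab
  · simp
  obtain ⟨ξ, hξ, hslope⟩ := exists_deriv_eq_slope (fun s => f.eval s) hab f.continuousOn
    f.differentiable.differentiableOn
  rw [Polynomial.deriv] at hslope
  have hξC : ξ ∈ C := hC.out ha hb (Ioo_subset_Icc_self hξ)
  rw [eq_div_iff (sub_pos.2 hab).ne'] at hslope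
  rw [← hslope, sign_mul,
    hC.isPreconnected.sign_eq f.derivative.continuousOn hf hξC hc]

theorem injOn_eval (hC : C.OrdConnected) (hf : ∀ s ∈ C, f.derivative.eval s ≠ 0) :
    InjOn (fun s => f.eval s) C := by
  intro a ha b hb hab
  have h := sign_eval_sub_eval hC hf ha hb ha
  rw [show f.eval b - f.eval a = 0 from sub_eq_zero.2 hab.symm, sign_zero, eq_comm,
    mul_eq_zero, sign_eq_zero_iff, sign_eq_zero_iff, sub_eq_zero] at h
  exact (h.resolve_left (hf a ha)).symm

theorem degree_pos_of_derivative_eval_ne_zero {t : ℝ} (h : f.derivative.eval t ≠ 0) :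
    0 < f.degree :=
  natDegree_pos_iff_degree_pos.1 (Nat.pos_of_ne_zero
    (derivative_ne_zero.1 fun h0 => h (by rw [h0, eval_zero])))

theorem exists_le_eval_neg_of_monotoneOn (hf : 0 < f.degree) {t : ℝ}
    (hmono : MonotoneOn (fun s => f.eval s) (Iic t)) : ∃ s ≤ t, f.eval s < 0 := by
  by_contra! h
  obtain ⟨s, hbig, hs⟩ := ((f.abs_tendsto_atBot hf).eventually_gt_atTop (f.eval t)).and
    (eventually_le_atBot t) |>.exists
  rw [abs_of_nonneg (h s hs)] at hbig
  exact hbig.not_ge (hmono hs self_mem_Iic hs)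

theorem exists_ge_eval_pos_of_monotoneOn (hf : 0 < f.degree) {t : ℝ}
    (hmono : MonotoneOn (fun s => f.eval s) (Ici t)) : ∃ s ≥ t, 0 < f.eval s := by
  by_contra! h
  obtain ⟨s, hbig, hs⟩ := ((f.abs_tendsto_atTop hf).eventually_gt_atTop (-f.eval t)).and
    (eventually_ge_atTop t) |>.exists
  rw [abs_of_nonpos (h s hs)] at hbig
  exact (neg_lt_neg_iff.1 hbig).not_ge (hmono self_mem_Ici hs hs)

end Polynomial

/-- For finite `V` and `t ∉ V`, the open interval (possibly unbounded) between the points of `V`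
adjacent to `t`. -/
def cell (V : Set ℝ) (t : ℝ) : Set ℝ :=
  {s | ∀ v ∈ V, (v < t → v < s) ∧ (t < v → s < v)}

section Cell

variable {V : Set ℝ} {t s : ℝ}

theorem mem_cell_self (V : Set ℝ) (t : ℝ) : t ∈ cell V t :=
  fun _ _ => ⟨id, id⟩

theorem ordConnected_cell (V : Set ℝ) (t : ℝ) : (cell V t).OrdConnected :=
  ⟨fun _ ha _ hb _ hs v hv =>
    ⟨fun h => ((ha v hv).1 h).trans_le hs.1, fun h => hs.2.trans_lt ((hb v hv).2 h)⟩⟩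

theorem isOpen_cell (hV : V.Finite) (t : ℝ) : IsOpen (cell V t) := by
  have : cell V t = ⋂ v ∈ V, {s | (v < t → v < s) ∧ (t < v → s < v)} := by
    ext; simp [cell]
  rw [this]
  refine hV.isOpen_biInter fun v _ => ?_
  rw [ofPred_and]
  exact IsOpen.inter (by by_cases h : v < t <;> simp [h, isOpen_lt'])
    (by by_cases h : t < v <;> simp [h, isOpen_gt'])

theorem notMem_of_mem_cell (ht : t ∉ V) (hs : s ∈ cell V t) : s ∉ V := fun hsV => by
  rcases lt_trichotomy s t with h | rfl | h
  · exact lt_irrefl s ((hs s hsV).1 h)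
  · exact ht hsV
  · exact lt_irrefl s ((hs s hsV).2 h)

theorem cell_eq_of_mem (ht : t ∉ V) (hs : s ∈ cell V t) : cell V s = cell V t := by
  have key : ∀ v ∈ V, (v < s ↔ v < t) ∧ (s < v ↔ t < v) := fun v hv => by
    have hvt : v ≠ t := fun h => ht (h ▸ hv)
    constructor
    · exact ⟨fun h => (lt_or_gt_of_ne hvt).resolve_right fun h' => h.not_gt ((hs v hv).2 h'),
        (hs v hv).1⟩
    · exact ⟨fun h => (lt_or_gt_of_ne hvt).resolve_left fun h' => h.not_gt ((hs v hv).1 h'),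
        (hs v hv).2⟩
  ext u
  exact forall₂_congr fun v hv => by rw [(key v hv).1, (key v hv).2]

theorem OrderIso.mem_cell_image (φ : ℝ ≃o ℝ) : φ s ∈ cell (φ '' V) (φ t) ↔ s ∈ cell V t := by
  simp [cell, φ.lt_iff_lt]

theorem mem_cell_of_eqOn {φ ψ : ℝ ≃o ℝ} (hφ : EqOn φ ψ V) (t : ℝ) :
    φ t ∈ cell (ψ '' V) (ψ t) := by
  rintro _ ⟨w, hw, rfl⟩
  rw [ψ.lt_iff_lt, ψ.lt_iff_lt, ← hφ hw, φ.lt_iff_lt, φ.lt_iff_lt]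
  exact ⟨id, id⟩

theorem Ioo_subset_cell_of_isGreatest {a : ℝ} (ha : IsGreatest (V ∩ Iio t) a)
    (hs : s ∈ cell V t) : Ioo a s ⊆ cell V t :=
  fun _ hu v hv => ⟨fun h => (ha.2 ⟨hv, h⟩).trans_lt hu.1, fun h => hu.2.trans ((hs v hv).2 h)⟩

theorem Ioo_subset_cell_of_isLeast {b : ℝ} (hb : IsLeast (V ∩ Ioi t) b)
    (hs : s ∈ cell V t) : Ioo s b ⊆ cell V t :=
  fun _ hu v hv => ⟨fun h => ((hs v hv).1 h).trans hu.1, fun h => hu.2.trans_le (hb.2 ⟨hv, h⟩)⟩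

theorem Iic_subset_cell (h : V ∩ Iio t = ∅) : Iic t ⊆ cell V t :=
  fun _ hu v hv => ⟨fun hvt => (h.subset ⟨hv, hvt⟩ : v ∈ (∅ : Set ℝ)).elim,
    fun hvt => lt_of_le_of_lt hu hvt⟩

theorem Ici_subset_cell (h : V ∩ Ioi t = ∅) : Ici t ⊆ cell V t :=
  fun _ hu v hv => ⟨fun hvt => lt_of_lt_of_le hvt hu,
    fun hvt => (h.subset ⟨hv, hvt⟩ : v ∈ (∅ : Set ℝ)).elim⟩

end Cell

def signSet (f : ℝ[X]) (C : Set ℝ) : Set SignType :=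
  (fun s => SignType.sign (f.eval s)) '' C

section SignSet

variable {f : ℝ[X]} {C : Set ℝ}

theorem neg_one_mem_signSet : -1 ∈ signSet f C ↔ ∃ s ∈ C, f.eval s < 0 := by
  simp [signSet, sign_eq_neg_one_iff]

theorem one_mem_signSet : 1 ∈ signSet f C ↔ ∃ s ∈ C, 0 < f.eval s := by
  simp [signSet, sign_eq_one_iff]

theorem zero_mem_signSet : 0 ∈ signSet f C ↔ ∃ s ∈ C, f.eval s = 0 := by
  simp [signSet, sign_eq_zero_iff]

theorem mem_signSet_neg {ε : SignType} : ε ∈ signSet (-f) C ↔ -ε ∈ signSet f C := by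
  simp [signSet, Left.sign_neg, neg_eq_iff_eq_neg]

theorem signSet_eq_singleton (hC : IsPreconnected C) (hf : ∀ s ∈ C, f.eval s ≠ 0) {t : ℝ}
    (ht : t ∈ C) : signSet f C = {SignType.sign (f.eval t)} := by
  refine (eq_singleton_iff_unique_mem.2 ⟨⟨t, ht, rfl⟩, ?_⟩)
  rintro _ ⟨s, hs, rfl⟩
  exact hC.sign_eq f.continuousOn hf hs ht

theorem zero_mem_signSet_iff (hCo : IsOpen C) (hC : C.OrdConnected)
    (hf : ∀ s ∈ C, f.derivative.eval s ≠ 0) :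
    0 ∈ signSet f C ↔ -1 ∈ signSet f C ∧ 1 ∈ signSet f C := by
  rw [zero_mem_signSet, neg_one_mem_signSet, one_mem_signSet]
  constructor
  · rintro ⟨r, hr, hr0⟩
    obtain ⟨l, u, ⟨hl, hu⟩, hsub⟩ := mem_nhds_iff_exists_Ioo_subset.1 (hCo.mem_nhds hr)
    have hsign : ∀ s ∈ Ioo l u, SignType.sign (f.eval s) =
        SignType.sign (f.derivative.eval r) * SignType.sign (s - r) := fun s hs => by
      rw [← sign_eval_sub_eval hC hf hr (hsub hs) hr, hr0, sub_zero]
    obtain ⟨a, hla, har⟩ := exists_between hl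
    obtain ⟨b, hrb, hbu⟩ := exists_between hu
    have ha : a ∈ Ioo l u := ⟨hla, har.trans hu⟩
    have hb : b ∈ Ioo l u := ⟨hl.trans hrb, hbu⟩
    have hfa := hsign a ha
    have hfb := hsign b hb
    rw [sign_neg (sub_neg.2 har)] at hfa
    rw [sign_pos (sub_pos.2 hrb)] at hfb
    rcases (SignType.sign (f.derivative.eval r)).trichotomy with hδ | hδ | hδ <;>
      rw [hδ] at hfa hfb
    · exact ⟨⟨b, hsub hb, sign_eq_neg_one_iff.1 (by simpa using hfb)⟩,
        ⟨a, hsub ha, sign_eq_one_iff.1 (by simpa using hfa)⟩⟩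
    · exact absurd (sign_eq_zero_iff.1 hδ) (hf r hr)
    · exact ⟨⟨a, hsub ha, sign_eq_neg_one_iff.1 (by simpa using hfa)⟩,
        ⟨b, hsub hb, sign_eq_one_iff.1 (by simpa using hfb)⟩⟩
  · rintro ⟨⟨a, ha, hfa⟩, ⟨b, hb, hfb⟩⟩
    obtain ⟨r, hr, hr0⟩ := hC.isPreconnected.intermediate_value₂ ha hb f.continuousOn
      continuousOn_const hfa.le hfb.le
    exact ⟨r, hr, hr0⟩

end SignSet

section CellSigns

variable {V W : Set ℝ} {t : ℝ} {f p pb : ℝ[X]}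

/-- If no point of `V` lies left of `t`, the right-hand side is vacuous: an increasing polynomial
tends to `-∞` at `-∞`. -/
theorem exists_mem_cell_eval_neg_iff (hV : V.Finite)
    (hf : ∀ s ∈ cell V t, 0 < f.derivative.eval s) :
    (∃ s ∈ cell V t, f.eval s < 0) ↔ ∀ a, IsGreatest (V ∩ Iio t) a → f.eval a < 0 := by
  constructor
  · rintro ⟨s, hs, hfs⟩ a ha
    have has : a < s := (hs a ha.1.1).1 ha.1.2
    have hmono := strictMonoOn_eval (f := f) (convex_Icc a s) fun u hu =>
      hf u (Ioo_subset_cell_of_isGreatest ha hs (by rwa [interior_Icc] at hu))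
    exact (hmono (left_mem_Icc.2 has.le) (right_mem_Icc.2 has.le) has).trans hfs
  intro h
  rcases (V ∩ Iio t).eq_empty_or_nonempty with he | hne
  · have hsub := Iic_subset_cell he
    have hmono := strictMonoOn_eval (f := f) (convex_Iic t) fun u hu =>
      hf u (hsub (by rw [interior_Iic] at hu; exact le_of_lt (mem_Iio.1 hu)))
    obtain ⟨s, hs, hfs⟩ := exists_le_eval_neg_of_monotoneOn
      (degree_pos_of_derivative_eval_ne_zero (hf t (mem_cell_self V t)).ne') hmono.monotoneOn
    exact ⟨s, hsub hs, hfs⟩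
  obtain ⟨a, ha, hmax⟩ := exists_max_image _ id (hV.inter_of_left _) hne
  have hgr : IsGreatest (V ∩ Iio t) a := ⟨ha, fun v hv => hmax v hv⟩
  obtain ⟨s, hfs, hs⟩ := ((f.continuous.tendsto a).eventually (gt_mem_nhds (h a hgr))).filter_mono
    nhdsWithin_le_nhds |>.and (Ioo_mem_nhdsGT ha.2) |>.exists
  exact ⟨s, Ioo_subset_cell_of_isGreatest hgr (mem_cell_self V t) hs, hfs⟩

theorem exists_mem_cell_eval_pos_iff (hV : V.Finite)
    (hf : ∀ s ∈ cell V t, 0 < f.derivative.eval s) :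
    (∃ s ∈ cell V t, 0 < f.eval s) ↔ ∀ b, IsLeast (V ∩ Ioi t) b → 0 < f.eval b := by
  constructor
  · rintro ⟨s, hs, hfs⟩ b hb
    have hsb : s < b := (hs b hb.1.1).2 hb.1.2
    have hmono := strictMonoOn_eval (f := f) (convex_Icc s b) fun u hu =>
      hf u (Ioo_subset_cell_of_isLeast hb hs (by rwa [interior_Icc] at hu))
    exact hfs.trans (hmono (left_mem_Icc.2 hsb.le) (right_mem_Icc.2 hsb.le) hsb)
  intro h
  rcases (V ∩ Ioi t).eq_empty_or_nonempty with he | hne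
  · have hsub := Ici_subset_cell he
    have hmono := strictMonoOn_eval (f := f) (convex_Ici t) fun u hu =>
      hf u (hsub (by rw [interior_Ici] at hu; exact le_of_lt (mem_Ioi.1 hu)))
    obtain ⟨s, hs, hfs⟩ := exists_ge_eval_pos_of_monotoneOn
      (degree_pos_of_derivative_eval_ne_zero (hf t (mem_cell_self V t)).ne') hmono.monotoneOn
    exact ⟨s, hsub hs, hfs⟩
  obtain ⟨b, hb, hmin⟩ := exists_min_image _ id (hV.inter_of_left _) hne
  have hle : IsLeast (V ∩ Ioi t) b := ⟨hb, fun v hv => hmin v hv⟩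
  obtain ⟨s, hfs, hs⟩ := ((f.continuous.tendsto b).eventually (lt_mem_nhds (h b hle))).filter_mono
    nhdsWithin_le_nhds |>.and (Ioo_mem_nhdsLT hb.2) |>.exists
  exact ⟨s, Ioo_subset_cell_of_isLeast hle (mem_cell_self V t) hs, hfs⟩

theorem signSet_cell_eq_of_derivative_pos (hW : W.Finite) (ψ : ℝ ≃o ℝ)
    (hp : ∀ u ∈ cell (ψ '' W) (ψ t), 0 < p.derivative.eval u)
    (hpb : ∀ s ∈ cell W t, 0 < pb.derivative.eval s)
    (hsign : ∀ w ∈ W, SignType.sign (p.eval (ψ w)) = SignType.sign (pb.eval w)) :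
    signSet p (cell (ψ '' W) (ψ t)) = signSet pb (cell W t) := by
  have hV : (ψ '' W).Finite := hW.image ψ
  have hneg : -1 ∈ signSet p (cell (ψ '' W) (ψ t)) ↔ -1 ∈ signSet pb (cell W t) := by
    rw [neg_one_mem_signSet, neg_one_mem_signSet, exists_mem_cell_eval_neg_iff hV hp,
      exists_mem_cell_eval_neg_iff hW hpb, ← ψ.image_Iio, ← image_inter ψ.injective,
      ψ.surjective.forall]
    refine forall_congr' fun a => ?_
    rw [ψ.strictMono.map_isGreatest]
    exact imp_congr_right fun ha => by
      rw [← sign_eq_neg_one_iff, ← sign_eq_neg_one_iff, hsign a ha.1.1]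
  have hpos : 1 ∈ signSet p (cell (ψ '' W) (ψ t)) ↔ 1 ∈ signSet pb (cell W t) := by
    rw [one_mem_signSet, one_mem_signSet, exists_mem_cell_eval_pos_iff hV hp,
      exists_mem_cell_eval_pos_iff hW hpb, ← ψ.image_Ioi, ← image_inter ψ.injective,
      ψ.surjective.forall]
    refine forall_congr' fun b => ?_
    rw [ψ.strictMono.map_isLeast]
    exact imp_congr_right fun hb => by
      rw [← sign_eq_one_iff, ← sign_eq_one_iff, hsign b hb.1.1]
  ext ε
  rcases ε.trichotomy with rfl | rfl | rfl
  · exact hneg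
  · rw [zero_mem_signSet_iff (isOpen_cell hV _) (ordConnected_cell _ _) fun u hu => (hp u hu).ne',
      zero_mem_signSet_iff (isOpen_cell hW _) (ordConnected_cell _ _) fun s hs => (hpb s hs).ne',
      hneg, hpos]
  · exact hpos

end CellSigns

def SignMatch (φ : ℝ ≃o ℝ) (f g : ℝ[X]) : Prop :=
  ∀ t, SignType.sign (f.eval (φ t)) = SignType.sign (g.eval t)

section SignMatch

variable {W : Set ℝ} {φ ψ : ℝ ≃o ℝ} {f g p pb : ℝ[X]}

theorem SignMatch.eval_eq_zero_iff (h : SignMatch φ f g) (t : ℝ) :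
    f.eval (φ t) = 0 ↔ g.eval t = 0 := by
  rw [← sign_eq_zero_iff, h t, sign_eq_zero_iff]

theorem SignMatch.eq_zero (h : SignMatch φ f 0) : f = 0 :=
  Polynomial.funext fun u => by
    simpa using (h.eval_eq_zero_iff (φ.symm u)).2 eval_zero

theorem SignMatch.congr_eqOn (h : SignMatch ψ f g) (hg : ∀ s, g.eval s = 0 → s ∈ W)
    (hφ : EqOn φ ψ W) : SignMatch φ f g := by
  intro t
  by_cases ht : t ∈ W
  · rw [hφ ht, h t]
  have hf : ∀ u ∈ cell (ψ '' W) (ψ t), f.eval u ≠ 0 := fun u hu hfu => by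
    obtain ⟨s, rfl⟩ := ψ.surjective u
    exact notMem_of_mem_cell (by rwa [ψ.injective.mem_set_image]) hu
      (mem_image_of_mem ψ (hg s ((h.eval_eq_zero_iff s).1 hfu)))
  rw [← h t, (ordConnected_cell _ _).isPreconnected.sign_eq f.continuousOn hf
    (mem_cell_of_eqOn hφ t) (mem_cell_self _ _)]

theorem signSet_cell_eq (hW : W.Finite) (ψ : ℝ ≃o ℝ)
    (hroots : ∀ s, pb.derivative.eval s = 0 → s ∈ W) (hψ : SignMatch ψ p.derivative pb.derivative)
    (hsign : ∀ w ∈ W, SignType.sign (p.eval (ψ w)) = SignType.sign (pb.eval w)) {t : ℝ}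
    (ht : t ∉ W) : signSet p (cell (ψ '' W) (ψ t)) = signSet pb (cell W t) := by
  have hpb : ∀ s ∈ cell W t, SignType.sign (pb.derivative.eval s) =
      SignType.sign (pb.derivative.eval t) := fun s hs =>
    (ordConnected_cell W t).isPreconnected.sign_eq pb.derivative.continuousOn
      (fun s hs h0 => notMem_of_mem_cell ht hs (hroots s h0)) hs (mem_cell_self W t)
  have hp : ∀ u ∈ cell (ψ '' W) (ψ t), SignType.sign (p.derivative.eval u) =
      SignType.sign (pb.derivative.eval t) := fun u hu => by
    obtain ⟨s, rfl⟩ := ψ.surjective u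
    rw [hψ s, hpb s (ψ.mem_cell_image.1 hu)]
  -- when both derivatives are negative on the cells, pass to `-p` and `-pb`
  rcases (SignType.sign (pb.derivative.eval t)).trichotomy with hδ | hδ | hδ
  · have h := signSet_cell_eq_of_derivative_pos (p := -p) (pb := -pb) hW ψ
      (fun u hu => by simpa using sign_eq_neg_one_iff.1 ((hp u hu).trans hδ))
      (fun s hs => by simpa using sign_eq_neg_one_iff.1 ((hpb s hs).trans hδ))
      (fun w hw => by simp [Left.sign_neg, hsign w hw])
    ext ε
    rw [← neg_neg ε, ← mem_signSet_neg, h, mem_signSet_neg]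
  · exact absurd (hroots t (sign_eq_zero_iff.1 hδ)) ht
  · exact signSet_cell_eq_of_derivative_pos hW ψ
      (fun u hu => sign_eq_one_iff.1 ((hp u hu).trans hδ))
      (fun s hs => sign_eq_one_iff.1 ((hpb s hs).trans hδ)) hsign

end SignMatch

section Extension

variable {W : Set ℝ} {φ ψ : ℝ ≃o ℝ} {p pb : ℝ[X]}

theorem strictMonoOn_of_mem_cell {S : Set ℝ} {β : ℝ → ℝ} (hβW : EqOn β ψ W)
    (hβ : ∀ s ∈ S, β s ∈ cell (ψ '' W) (ψ s))
    (hS : ∀ s ∈ S, ∀ s' ∈ S, s ∉ W → s' ∈ cell W s → s = s') : StrictMonoOn β S := by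
  intro s hs s' hs' hlt
  by_cases hsW : s ∈ W
  · rw [hβW hsW]
    exact (hβ s' hs' (ψ s) (mem_image_of_mem ψ hsW)).1 (ψ.strictMono hlt)
  by_cases hs'W : s' ∈ W
  · rw [hβW hs'W]
    exact (hβ s hs (ψ s') (mem_image_of_mem ψ hs'W)).2 (ψ.strictMono hlt)
  obtain ⟨w, hw, hsw, hws'⟩ : ∃ w ∈ W, s < w ∧ w < s' := by
    by_contra! hsep
    refine hlt.ne (hS s hs s' hs' hsW fun v hv => ⟨fun h => h.trans hlt, fun h => ?_⟩)
    exact (hsep v hv h).lt_of_ne fun h' => hs'W (h' ▸ hv)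
  exact ((hβ s hs (ψ w) (mem_image_of_mem ψ hw)).2 (ψ.strictMono hsw)).trans
    ((hβ s' hs' (ψ w) (mem_image_of_mem ψ hw)).1 (ψ.strictMono hws'))

theorem signMatch_of_eqOn (hW : W.Finite) (hroots : ∀ s, pb.derivative.eval s = 0 → s ∈ W)
    (hψ : SignMatch ψ p.derivative pb.derivative)
    (hsign : ∀ w ∈ W, SignType.sign (p.eval (ψ w)) = SignType.sign (pb.eval w))
    (hφ : EqOn φ ψ W) (hφroot : ∀ r ∉ W, pb.eval r = 0 → p.eval (φ r) = 0) :
    SignMatch φ p pb := by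
  intro t
  by_cases htW : t ∈ W
  · rw [hφ htW, hsign t htW]
  by_cases ht0 : pb.eval t = 0
  · rw [hφroot t htW ht0, ht0]
  by_cases hroot : ∃ r ∈ cell W t, pb.eval r = 0
  · obtain ⟨r, hr, hr0⟩ := hroot
    have hrW := notMem_of_mem_cell htW hr
    have hψt : ψ t ∉ ψ '' W := by rwa [ψ.injective.mem_set_image]
    have hφr : φ r ∈ cell (ψ '' W) (ψ t) := by
      rw [← cell_eq_of_mem hψt (ψ.mem_cell_image.2 hr)]
      exact mem_cell_of_eqOn hφ r
    have hpb' : ∀ s ∈ cell W t, pb.derivative.eval s ≠ 0 := fun s hs h0 =>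
      notMem_of_mem_cell htW hs (hroots s h0)
    have hp' : ∀ u ∈ cell (ψ '' W) (ψ t), p.derivative.eval u ≠ 0 := fun u hu h0 => by
      obtain ⟨s, rfl⟩ := ψ.surjective u
      exact hpb' s (ψ.mem_cell_image.1 hu) ((hψ.eval_eq_zero_iff s).1 h0)
    calc SignType.sign (p.eval (φ t))
        = SignType.sign (p.eval (φ t) - p.eval (φ r)) := by rw [hφroot r hrW hr0, sub_zero]
      _ = SignType.sign (p.derivative.eval (ψ t)) * SignType.sign (φ t - φ r) :=
        sign_eval_sub_eval (ordConnected_cell _ _) hp' hφr (mem_cell_of_eqOn hφ t)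
          (mem_cell_self _ _)
      _ = SignType.sign (pb.derivative.eval t) * SignType.sign (t - r) := by
        rw [hψ t, φ.strictMono.sign_sub]
      _ = SignType.sign (pb.eval t - pb.eval r) :=
        (sign_eval_sub_eval (ordConnected_cell _ _) hpb' hr (mem_cell_self _ _)
          (mem_cell_self _ _)).symm
      _ = SignType.sign (pb.eval t) := by rw [hr0, sub_zero]
  · push Not at hroot
    have h := signSet_cell_eq hW ψ hroots hψ hsign htW
    rw [signSet_eq_singleton (ordConnected_cell W t).isPreconnected hroot (mem_cell_self W t)] at h
    exact h.subset ⟨φ t, mem_cell_of_eqOn hφ t, rfl⟩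

theorem exists_orderIso_signMatch (hW : W.Finite) (ψ : ℝ ≃o ℝ)
    (hroots : ∀ s, pb.derivative.eval s = 0 → s ∈ W) (hψ : SignMatch ψ p.derivative pb.derivative)
    (hsign : ∀ w ∈ W, SignType.sign (p.eval (ψ w)) = SignType.sign (pb.eval w)) :
    ∃ φ : ℝ ≃o ℝ, EqOn φ ψ W ∧ SignMatch φ p pb := by
  classical
  have hpb : pb ≠ 0 := by
    rintro rfl
    exact infinite_univ (hW.subset fun s _ => hroots s (by simp))
  have hroot : ∀ r ∉ W, pb.eval r = 0 → ∃ u ∈ cell (ψ '' W) (ψ r), p.eval u = 0 := by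
    intro r hr hr0
    rw [← zero_mem_signSet, signSet_cell_eq hW ψ hroots hψ hsign hr, zero_mem_signSet]
    exact ⟨r, mem_cell_self W r, hr0⟩
  choose! ρ hρ hρ0 using hroot
  -- `φ` extends `β`, which is `ψ` on `W` and sends each other root of `pb` to the root of `p`
  -- in the matching cell
  let β : ℝ → ℝ := fun s => if s ∈ W then ψ s else ρ s
  let S : Set ℝ := W ∪ {r | pb.eval r = 0}
  have hS : S.Finite := hW.union (pb.finite_setOfPred_isRoot hpb)
  have hβW : EqOn β ψ W := fun s hs => if_pos hs
  have hmono : StrictMonoOn β S := by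
    refine strictMonoOn_of_mem_cell hβW (fun s hs => ?_) fun s hs s' hs' hsW hcell => ?_
    · by_cases hsW : s ∈ W
      · rw [hβW hsW]; exact mem_cell_self _ _
      · simp only [β, if_neg hsW]; exact hρ s hsW (hs.resolve_left hsW)
    · have hs'W := notMem_of_mem_cell hsW hcell
      have hpb' : ∀ u ∈ cell W s, pb.derivative.eval u ≠ 0 := fun u hu h0 =>
        notMem_of_mem_cell hsW hu (hroots u h0)
      exact injOn_eval (ordConnected_cell W s) hpb' (mem_cell_self W s) hcell
        (((hs.resolve_left hsW) : pb.eval s = 0).trans (hs'.resolve_left hs'W).symm)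
  obtain ⟨φ, hφ⟩ := exists_orderIso_eqOn_of_strictMonoOn (s := hS.toFinset) (by simpa using hmono)
  have hφW : EqOn φ ψ W := fun w hw => (hφ (by simp [S, hw])).trans (hβW hw)
  refine ⟨φ, hφW, signMatch_of_eqOn hW hroots hψ hsign hφW fun r hr hr0 => ?_⟩
  rw [hφ (by simp [S, hr0]), show β r = ρ r from if_neg hr]
  exact hρ0 r hr hr0

end Extension

section SignEquivalent

variable {σ : Type*}

def SameSigns (G : Finset (MvPolynomial σ ℝ)) (x y : σ → ℝ) : Prop :=
  ∀ g ∈ G, SignType.sign (MvPolynomial.eval x g) = SignType.sign (MvPolynomial.eval y g)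

theorem SameSigns.mono {G G' : Finset (MvPolynomial σ ℝ)} {x y : σ → ℝ} (h : SameSigns G x y)
    (hG : G' ⊆ G) : SameSigns G' x y :=
  fun g hg => h g (hG hg)

def SignEquivalent (P : Multiset (MvPolynomial σ ℝ)[X]) (x y : σ → ℝ) : Prop :=
  ∃ φ : ℝ ≃o ℝ, ∀ q ∈ P, SignMatch φ (q.map (MvPolynomial.eval x)) (q.map (MvPolynomial.eval y))

variable {P : Multiset (MvPolynomial σ ℝ)[X]} {x y : σ → ℝ}

theorem signEquivalent_of_natDegree_eq_zero (hP : ∀ q ∈ P, q.natDegree = 0)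
    (hlc : ∀ q ∈ P, SignType.sign (MvPolynomial.eval x q.leadingCoeff) =
      SignType.sign (MvPolynomial.eval y q.leadingCoeff)) :
    SignEquivalent P x y := by
  refine ⟨OrderIso.refl ℝ, fun q hq t => ?_⟩
  have h := hlc q hq
  rw [leadingCoeff, hP q hq] at h
  rw [eq_C_of_natDegree_eq_zero (hP q hq)]
  simpa using h

theorem SignEquivalent.cons_of_eraseLead {r : (MvPolynomial σ ℝ)[X]}
    (hx : MvPolynomial.eval x r.leadingCoeff = 0) (hy : MvPolynomial.eval y r.leadingCoeff = 0)
    (h : SignEquivalent (r.eraseLead ::ₘ P) x y) : SignEquivalent (r ::ₘ P) x y := by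
  obtain ⟨φ, hφ⟩ := h
  refine ⟨φ, fun q hq => ?_⟩
  rcases Multiset.mem_cons.1 hq with rfl | hq
  · rw [map_eq_map_eraseLead hx, map_eq_map_eraseLead hy]
    exact hφ _ (Multiset.mem_cons_self _ _)
  · exact hφ q (Multiset.mem_cons_of_mem hq)

/-- At a root of `q`, the sign of `p` is that of its pseudo-remainder by `q`, up to the sign of a
power of the leading coefficient of `q`, which is the same at `x` and at `y`. -/
theorem sign_eval_map_eq_of_pseudoRem {p q : (MvPolynomial σ ℝ)[X]} (hq : q ≠ 0)
    (hlc : MvPolynomial.eval y q.leadingCoeff ≠ 0)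
    (hlcs : SignType.sign (MvPolynomial.eval x q.leadingCoeff) =
      SignType.sign (MvPolynomial.eval y q.leadingCoeff)) {ψ : ℝ ≃o ℝ}
    (hψq : SignMatch ψ (q.map (MvPolynomial.eval x)) (q.map (MvPolynomial.eval y)))
    (hψr : SignMatch ψ ((pseudoRem p q).map (MvPolynomial.eval x))
      ((pseudoRem p q).map (MvPolynomial.eval y)))
    {w : ℝ} (hw : (q.map (MvPolynomial.eval y)).eval w = 0) :
    SignType.sign ((p.map (MvPolynomial.eval x)).eval (ψ w)) =
      SignType.sign ((p.map (MvPolynomial.eval y)).eval w) := by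
  obtain ⟨k, h, hpq⟩ := exists_leadingCoeff_pow_mul_eq p hq
  have key : ∀ (z : σ → ℝ) (u : ℝ), MvPolynomial.eval z q.leadingCoeff ^ k *
      (p.map (MvPolynomial.eval z)).eval u = (h.map (MvPolynomial.eval z)).eval u *
      (q.map (MvPolynomial.eval z)).eval u + ((pseudoRem p q).map (MvPolynomial.eval z)).eval u :=
    fun z u => by simpa using congrArg (fun f => (f.map (MvPolynomial.eval z)).eval u) hpq
  have hx := key x (ψ w)
  have hy := key y w
  rw [(hψq.eval_eq_zero_iff w).2 hw, mul_zero, zero_add] at hx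
  rw [hw, mul_zero, zero_add] at hy
  have := hψr w
  rw [← hx, ← hy, sign_mul, sign_mul, sign_pow, sign_pow, hlcs] at this
  exact mul_left_cancel₀ (pow_ne_zero _ (sign_ne_zero.2 hlc)) this

end SignEquivalent

section SignDetermination

variable {σ : Type*} {Q : Multiset (MvPolynomial σ ℝ)[X]} {p : (MvPolynomial σ ℝ)[X]}
  {x y : σ → ℝ}

theorem sign_eval_map_eq_of_mem_derivRemFamily (hdeg : 0 < p.natDegree)
    (hlc : ∀ q ∈ p ::ₘ Q, q ≠ 0 → MvPolynomial.eval y q.leadingCoeff ≠ 0)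
    (hlcs : ∀ q ∈ p ::ₘ Q, SignType.sign (MvPolynomial.eval x q.leadingCoeff) =
      SignType.sign (MvPolynomial.eval y q.leadingCoeff)) {ψ : ℝ ≃o ℝ}
    (hψ : ∀ q ∈ derivRemFamily p Q,
      SignMatch ψ (q.map (MvPolynomial.eval x)) (q.map (MvPolynomial.eval y)))
    {q : (MvPolynomial σ ℝ)[X]} (hq : q ∈ derivative p ::ₘ Q)
    (hq0 : q.map (MvPolynomial.eval y) ≠ 0) {w : ℝ}
    (hw : (q.map (MvPolynomial.eval y)).eval w = 0) :
    SignType.sign ((p.map (MvPolynomial.eval x)).eval (ψ w)) =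
      SignType.sign ((p.map (MvPolynomial.eval y)).eval w) := by
  have hq0' : q ≠ 0 := by rintro rfl; simp at hq0
  have hlcq : MvPolynomial.eval y q.leadingCoeff ≠ 0 ∧
      SignType.sign (MvPolynomial.eval x q.leadingCoeff) =
        SignType.sign (MvPolynomial.eval y q.leadingCoeff) := by
    rcases Multiset.mem_cons.1 hq with rfl | hq
    · have hp := Multiset.mem_cons_self p Q
      simp only [leadingCoeff_derivative, map_mul, map_natCast, sign_mul, hlcs p hp, and_true]
      exact mul_ne_zero (hlc p hp (ne_zero_of_natDegree_gt hdeg)) (Nat.cast_ne_zero.2 hdeg.ne')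
    · exact ⟨hlc q (Multiset.mem_cons_of_mem hq) hq0', hlcs q (Multiset.mem_cons_of_mem hq)⟩
  exact sign_eval_map_eq_of_pseudoRem hq0' hlcq.1 hlcq.2 (hψ q (Multiset.mem_add.2 (Or.inl hq)))
    (hψ _ (Multiset.mem_add.2 (Or.inr (Multiset.mem_map_of_mem _ hq)))) hw

theorem SignEquivalent.cons_of_derivRemFamily (hdeg : 0 < p.natDegree)
    (hlc : ∀ q ∈ p ::ₘ Q, q ≠ 0 → MvPolynomial.eval y q.leadingCoeff ≠ 0)
    (hlcs : ∀ q ∈ p ::ₘ Q, SignType.sign (MvPolynomial.eval x q.leadingCoeff) =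
      SignType.sign (MvPolynomial.eval y q.leadingCoeff))
    (h : SignEquivalent (derivRemFamily p Q) x y) : SignEquivalent (p ::ₘ Q) x y := by
  classical
  obtain ⟨ψ, hψ⟩ := h
  have hψF : ∀ q ∈ derivative p ::ₘ Q,
      SignMatch ψ (q.map (MvPolynomial.eval x)) (q.map (MvPolynomial.eval y)) :=
    fun q hq => hψ q (Multiset.mem_add.2 (Or.inl hq))
  set W : Finset ℝ := (derivative p ::ₘ Q).toFinset.biUnion
    fun q => (q.map (MvPolynomial.eval y)).roots.toFinset
  have hW : ∀ s, s ∈ W ↔ ∃ q ∈ derivative p ::ₘ Q, q.map (MvPolynomial.eval y) ≠ 0 ∧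
      (q.map (MvPolynomial.eval y)).eval s = 0 := by
    simp [W, mem_roots']
  have hdy : (derivative p).map (MvPolynomial.eval y) ≠ 0 := by
    rw [← derivative_map, Ne, derivative_eq_zero, natDegree_map_of_leadingCoeff_ne_zero _
      (hlc p (Multiset.mem_cons_self p Q) (ne_zero_of_natDegree_gt hdeg))]
    exact hdeg.ne'
  obtain ⟨φ, hφW, hφ⟩ := exists_orderIso_signMatch (p := p.map (MvPolynomial.eval x))
    W.finite_toSet ψ
    (fun s hs => (hW s).2 ⟨_, Multiset.mem_cons_self _ _, hdy, by rwa [← derivative_map]⟩)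
    (by simpa only [derivative_map] using hψF _ (Multiset.mem_cons_self _ _)) fun w hw => by
      obtain ⟨q, hq, hq0, hqw⟩ := (hW w).1 hw
      exact sign_eval_map_eq_of_mem_derivRemFamily hdeg hlc hlcs hψ hq hq0 hqw
  refine ⟨φ, fun q hq => ?_⟩
  rcases Multiset.mem_cons.1 hq with rfl | hq
  · exact hφ
  have hqF : q ∈ derivative p ::ₘ Q := Multiset.mem_cons_of_mem hq
  by_cases hq0 : q.map (MvPolynomial.eval y) = 0
  · have hqx := (hq0 ▸ hψF q hqF : SignMatch ψ _ 0).eq_zero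
    intro t
    simp [hqx, hq0]
  · exact (hψF q hqF).congr_eqOn (fun s hs => (hW s).2 ⟨q, hqF, hq0, hs⟩) hφW

def SignDetermines (G : Finset (MvPolynomial σ ℝ)) (P : Multiset (MvPolynomial σ ℝ)[X]) : Prop :=
  ∀ x y, SameSigns G x y → SignEquivalent P x y

theorem exists_signDetermines_of_natDegree_eq_zero {P : Multiset (MvPolynomial σ ℝ)[X]}
    (hP : ∀ q ∈ P, q.natDegree = 0) : ∃ G, SignDetermines G P := by
  classical
  exact ⟨P.toFinset.image leadingCoeff, fun x y h => signEquivalent_of_natDegree_eq_zero hP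
    fun q hq => h _ (Finset.mem_image_of_mem _ (Multiset.mem_toFinset.2 hq))⟩

theorem exists_signDetermines_cons (hdeg : 0 < p.natDegree)
    (hG' : ∃ G, SignDetermines G (derivRemFamily p Q))
    (hGr : ∀ r ∈ p ::ₘ Q, r ≠ 0 → ∀ R, p ::ₘ Q = r ::ₘ R →
      ∃ G, SignDetermines G (r.eraseLead ::ₘ R)) :
    ∃ G, SignDetermines G (p ::ₘ Q) := by
  classical
  obtain ⟨G', hG'⟩ := hG'
  choose! R hR using fun r (hr : r ∈ p ::ₘ Q) => Multiset.exists_cons_of_mem hr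
  choose! Gr hGr using fun r hr hr0 => hGr r hr hr0 (R r) (hR r hr)
  refine ⟨(p ::ₘ Q).toFinset.image leadingCoeff ∪ G' ∪ (p ::ₘ Q).toFinset.biUnion Gr,
    fun x y h => ?_⟩
  have hlcs : ∀ q ∈ p ::ₘ Q, SignType.sign (MvPolynomial.eval x q.leadingCoeff) =
      SignType.sign (MvPolynomial.eval y q.leadingCoeff) := fun q hq =>
    h _ (Finset.mem_union_left _ (Finset.mem_union_left _
      (Finset.mem_image_of_mem _ (Multiset.mem_toFinset.2 hq))))
  by_cases hdgn : ∃ r ∈ p ::ₘ Q, r ≠ 0 ∧ MvPolynomial.eval x r.leadingCoeff = 0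
  · obtain ⟨r, hr, hr0, hrx⟩ := hdgn
    have hry : MvPolynomial.eval y r.leadingCoeff = 0 := by
      rw [← sign_eq_zero_iff, ← hlcs r hr, sign_eq_zero_iff, hrx]
    rw [hR r hr]
    refine (hGr r hr hr0 x y (h.mono fun g hg => ?_)).cons_of_eraseLead hrx hry
    exact Finset.mem_union_right _ (Finset.mem_biUnion.2 ⟨r, Multiset.mem_toFinset.2 hr, hg⟩)
  · push Not at hdgn
    refine (hG' x y (h.mono fun g hg => ?_)).cons_of_derivRemFamily hdeg (fun q hq hq0 => ?_) hlcs
    · exact Finset.mem_union_left _ (Finset.mem_union_right _ hg)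
    · rw [← sign_ne_zero, ← hlcs q hq, sign_ne_zero]
      exact hdgn q hq hq0

theorem exists_signDetermines (P : Multiset (MvPolynomial σ ℝ)[X]) : ∃ G, SignDetermines G P := by
  induction P using (Multiset.wellFounded_isDershowitzMannaLT.onFun
    (f := Multiset.map degree)).induction with
  | _ P ih =>
  by_cases hconst : ∀ q ∈ P, q.natDegree = 0
  · exact exists_signDetermines_of_natDegree_eq_zero hconst
  push Not at hconst
  obtain ⟨q₀, hq₀, hq₀deg⟩ := hconst
  obtain ⟨p, hpP, hmax⟩ := Multiset.exists_max_image natDegree (s := P) (by rintro rfl; simp at hq₀)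
  obtain ⟨Q, rfl⟩ := Multiset.exists_cons_of_mem hpP
  have hdeg : 0 < p.natDegree := (Nat.pos_of_ne_zero hq₀deg).trans_le (hmax _ hq₀)
  refine exists_signDetermines_cons hdeg (ih _ ?_) fun r _ hr0 R hR => ih _ ?_
  · exact isDershowitzMannaLT_derivRemFamily hdeg fun q hq => hmax q (Multiset.mem_cons_of_mem hq)
  · rw [Function.onFun, hR]
    exact isDershowitzMannaLT_eraseLead hr0 R

end SignDetermination

section SignDetermined

variable {σ : Type*}

def IsSignDetermined (F : Finset (MvPolynomial σ ℝ)) (S : Set (σ → ℝ)) : Prop :=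
  ∀ x y, SameSigns F x y → (x ∈ S ↔ y ∈ S)

variable {F : Finset (MvPolynomial σ ℝ)} {S T : Set (σ → ℝ)}

theorem IsSignDetermined.mono {F' : Finset (MvPolynomial σ ℝ)} (h : IsSignDetermined F S)
    (hF : F ⊆ F') : IsSignDetermined F' S :=
  fun x y hxy => h x y (hxy.mono hF)

theorem IsSignDetermined.compl (h : IsSignDetermined F S) : IsSignDetermined F Sᶜ :=
  fun x y hxy => (h x y hxy).not

theorem IsSignDetermined.union (hS : IsSignDetermined F S) (hT : IsSignDetermined F T) :
    IsSignDetermined F (S ∪ T) :=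
  fun x y hxy => (hS x y hxy).or (hT x y hxy)

theorem IsSignDetermined.inter (hS : IsSignDetermined F S) (hT : IsSignDetermined F T) :
    IsSignDetermined F (S ∩ T) :=
  fun x y hxy => (hS x y hxy).and (hT x y hxy)

end SignDetermined

section Semialgebraic

variable {n : ℕ} {S T : Set (Fin n → ℝ)}

theorem isBasicSemialgebraic_of_finite {A B : Set (MvPolynomial (Fin n) ℝ)} (hA : A.Finite)
    (hB : B.Finite) : IsBasicSemialgebraic
      {x | (∀ f ∈ A, 0 < MvPolynomial.eval x f) ∧ ∀ g ∈ B, MvPolynomial.eval x g = 0} := by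
  obtain ⟨s, f, -, rfl⟩ := hA.fin_param
  obtain ⟨t, g, -, rfl⟩ := hB.fin_param
  exact ⟨s, t, f, g, by simp only [forall_mem_range]⟩

theorem IsBasicSemialgebraic.iInter {ι : Type*} [Finite ι] {S : ι → Set (Fin n → ℝ)}
    (h : ∀ i, IsBasicSemialgebraic (S i)) : IsBasicSemialgebraic (⋂ i, S i) := by
  choose s t f g hS using h
  convert isBasicSemialgebraic_of_finite (finite_iUnion fun i => finite_range (f i))
    (finite_iUnion fun i => finite_range (g i)) using 1
  ext x
  simp only [hS, mem_iInter, mem_ofPred_eq, mem_iUnion, mem_range]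
  grind

theorem isBasicSemialgebraic_setOf_sign_eq (f : MvPolynomial (Fin n) ℝ) (ε : SignType) :
    IsBasicSemialgebraic {x | SignType.sign (MvPolynomial.eval x f) = ε} := by
  rcases ε.trichotomy with rfl | rfl | rfl
  · exact ⟨1, 0, ![-f], ![], by ext; simp [sign_eq_neg_one_iff]⟩
  · exact ⟨0, 1, ![], ![f], by ext; simp [sign_eq_zero_iff]⟩
  · exact ⟨1, 0, ![f], ![], by ext; simp [sign_eq_one_iff]⟩

theorem IsBasicSemialgebraic.isSemialgebraic (h : IsBasicSemialgebraic S) : IsSemialgebraic S :=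
  ⟨1, fun _ => S, fun _ => h, (iUnion_const S).symm⟩

theorem isSemialgebraic_iUnion_of_isBasicSemialgebraic {ι : Type*} [Finite ι]
    {S : ι → Set (Fin n → ℝ)} (h : ∀ i, IsBasicSemialgebraic (S i)) :
    IsSemialgebraic (⋃ i, S i) := by
  obtain ⟨r, ⟨e⟩⟩ := Finite.exists_equiv_fin ι
  exact ⟨r, S ∘ e.symm, fun i => h _, (e.symm.surjective.iUnion_comp S).symm⟩

theorem IsSignDetermined.isSemialgebraic {F : Finset (MvPolynomial (Fin n) ℝ)}
    (h : IsSignDetermined F S) : IsSemialgebraic S := by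
  let signs : (Fin n → ℝ) → F → SignType := fun x f => SignType.sign (MvPolynomial.eval x f)
  have hS : S = ⋃ ε : signs '' S, signs ⁻¹' {ε.1} := by
    ext x
    simp only [mem_iUnion, mem_preimage, mem_singleton_iff, Subtype.exists, mem_image,
      exists_prop]
    refine ⟨fun hx => ⟨_, ⟨x, hx, rfl⟩, rfl⟩, ?_⟩
    rintro ⟨_, ⟨y, hy, rfl⟩, hxy⟩
    exact (h y x fun f hf => (congrFun hxy ⟨f, hf⟩).symm).1 hy
  rw [hS]
  refine isSemialgebraic_iUnion_of_isBasicSemialgebraic fun ε => ?_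
  convert IsBasicSemialgebraic.iInter fun f : F => isBasicSemialgebraic_setOf_sign_eq f.1 (ε.1 f)
  ext x
  simp [signs, funext_iff]

theorem IsBasicSemialgebraic.exists_isSignDetermined (h : IsBasicSemialgebraic S) :
    ∃ F, IsSignDetermined F S := by
  classical
  obtain ⟨s, t, f, g, rfl⟩ := h
  refine ⟨Finset.univ.image f ∪ Finset.univ.image g, fun x y hxy => ?_⟩
  have hf : ∀ i, 0 < MvPolynomial.eval x (f i) ↔ 0 < MvPolynomial.eval y (f i) := fun i => by
    rw [← sign_eq_one_iff, hxy _ (by simp), sign_eq_one_iff]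
  have hg : ∀ j, MvPolynomial.eval x (g j) = 0 ↔ MvPolynomial.eval y (g j) = 0 := fun j => by
    rw [← sign_eq_zero_iff, hxy _ (by simp), sign_eq_zero_iff]
  simp only [mem_ofPred_eq, hf, hg]

theorem isSemialgebraic_iff_exists_isSignDetermined :
    IsSemialgebraic S ↔ ∃ F, IsSignDetermined F S := by
  classical
  refine ⟨?_, fun ⟨F, hF⟩ => hF.isSemialgebraic⟩
  rintro ⟨r, B, hB, rfl⟩
  choose F hF using fun i => (hB i).exists_isSignDetermined
  refine ⟨Finset.univ.biUnion F, fun x y hxy => ?_⟩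
  simp only [mem_iUnion]
  exact exists_congr fun i => hF i x y (hxy.mono (Finset.subset_biUnion_of_mem F (by simp)))

end Semialgebraic

/-- A polynomial in `n + 1` variables as a polynomial in the last one. -/
noncomputable def toPolyLast {R : Type*} [CommRing R] {n : ℕ} (f : MvPolynomial (Fin (n + 1)) R) :
    (MvPolynomial (Fin n) R)[X] :=
  MvPolynomial.finSuccEquiv R n (MvPolynomial.rename (finRotate (n + 1)) f)

theorem eval_snoc_eq_eval_toPolyLast {R : Type*} [CommRing R] {n : ℕ} (x : Fin n → R) (t : R)
    (f : MvPolynomial (Fin (n + 1)) R) :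
    MvPolynomial.eval (Fin.snoc x t) f = ((toPolyLast f).map (MvPolynomial.eval x)).eval t := by
  rw [toPolyLast, ← MvPolynomial.eval_eq_eval_mv_eval', MvPolynomial.eval_rename,
    Fin.snoc_eq_cons_rotate]
  rfl

section Projection

variable {n : ℕ} {S : Set (Fin (n + 1) → ℝ)}

theorem IsSignDetermined.exists_setOf_exists_snoc_mem {F : Finset (MvPolynomial (Fin (n + 1)) ℝ)}
    (h : IsSignDetermined F S) : ∃ G, IsSignDetermined G {x | ∃ t, Fin.snoc x t ∈ S} := by
  obtain ⟨G, hG⟩ := exists_signDetermines (F.val.map toPolyLast)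
  refine ⟨G, fun x y hxy => ?_⟩
  obtain ⟨φ, hφ⟩ := hG x y hxy
  have key : ∀ t, Fin.snoc x (φ t) ∈ S ↔ Fin.snoc y t ∈ S := fun t => h _ _ fun f hf => by
    simpa only [eval_snoc_eq_eval_toPolyLast] using hφ _ (Multiset.mem_map_of_mem _ hf) t
  exact ⟨fun ⟨s, hs⟩ => ⟨φ.symm s, (key _).1 (by rwa [φ.apply_symm_apply])⟩,
    fun ⟨t, ht⟩ => ⟨φ t, (key t).2 ht⟩⟩

theorem IsSemialgebraic.exists_snoc_mem (h : IsSemialgebraic S) :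
    IsSemialgebraic {x | ∃ t, Fin.snoc x t ∈ S} := by
  obtain ⟨F, hF⟩ := isSemialgebraic_iff_exists_isSignDetermined.1 h
  exact isSemialgebraic_iff_exists_isSignDetermined.2 hF.exists_setOf_exists_snoc_mem

end Projection

section Closure

variable {n : ℕ} {S T : Set (Fin n → ℝ)}

theorem IsSemialgebraic.compl (h : IsSemialgebraic S) : IsSemialgebraic Sᶜ := by
  obtain ⟨F, hF⟩ := isSemialgebraic_iff_exists_isSignDetermined.1 h
  exact isSemialgebraic_iff_exists_isSignDetermined.2 ⟨F, hF.compl⟩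

theorem IsSemialgebraic.union (hS : IsSemialgebraic S) (hT : IsSemialgebraic T) :
    IsSemialgebraic (S ∪ T) := by
  classical
  obtain ⟨F, hF⟩ := isSemialgebraic_iff_exists_isSignDetermined.1 hS
  obtain ⟨F', hF'⟩ := isSemialgebraic_iff_exists_isSignDetermined.1 hT
  exact isSemialgebraic_iff_exists_isSignDetermined.2
    ⟨F ∪ F', (hF.mono Finset.subset_union_left).union (hF'.mono Finset.subset_union_right)⟩

theorem IsSemialgebraic.inter (hS : IsSemialgebraic S) (hT : IsSemialgebraic T) :
    IsSemialgebraic (S ∩ T) := by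
  classical
  obtain ⟨F, hF⟩ := isSemialgebraic_iff_exists_isSignDetermined.1 hS
  obtain ⟨F', hF'⟩ := isSemialgebraic_iff_exists_isSignDetermined.1 hT
  exact isSemialgebraic_iff_exists_isSignDetermined.2
    ⟨F ∪ F', (hF.mono Finset.subset_union_left).inter (hF'.mono Finset.subset_union_right)⟩

theorem IsSemialgebraic.forall_snoc_mem {S : Set (Fin (n + 1) → ℝ)} (h : IsSemialgebraic S) :
    IsSemialgebraic {x | ∀ t, Fin.snoc x t ∈ S} := by
  simpa [compl_ofPred] using h.compl.exists_snoc_mem.compl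

theorem isSemialgebraic_setOf_eval_eq_zero (f : MvPolynomial (Fin n) ℝ) :
    IsSemialgebraic {x | MvPolynomial.eval x f = 0} :=
  IsBasicSemialgebraic.isSemialgebraic ⟨0, 1, ![], ![f], by ext; simp⟩

theorem isSemialgebraic_setOf_eval_pos (f : MvPolynomial (Fin n) ℝ) :
    IsSemialgebraic {x | 0 < MvPolynomial.eval x f} :=
  IsBasicSemialgebraic.isSemialgebraic ⟨1, 0, ![f], ![], by ext; simp⟩

end Closure

/-- Tarski–Seidenberg, logical form: the set of points satisfying a first-order formula
of the language of ordered fields with real parameters is semialgebraic. -/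
theorem isSemialgebraic_setOf_holds {n : ℕ} (φ : RealFormula n) :
    IsSemialgebraic {x : Fin n → ℝ | φ.Holds x} := by
  induction φ with
  | eq f => exact isSemialgebraic_setOf_eval_eq_zero f
  | pos f => exact isSemialgebraic_setOf_eval_pos f
  | and _ _ h₁ h₂ => exact h₁.inter h₂
  | or _ _ h₁ h₂ => exact h₁.union h₂
  | not _ h => exact h.compl
  | ex _ h => exact h.exists_snoc_mem
  | all _ h => exact h.forall_snoc_mem
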